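/- arXiv:1911.11827 — 7 statements merged into one kernel-verified Lean document; each statement's English description precedes it below -/
import Mathlib

section
/- Let a ∈ (0,1] and let H : [−1,1] → ℝ satisfy the cross-multiplied tail-balance equation 1 − H(t) = (1/2 + (t+1)·a/4) · (1 − H(t) + H(−t)) for all t ∈ [−1,1]. Then H(t) = (t+1)(a·t − a + 2)/4 for all t ∈ [−1,1]; that is, H is the Alpern–Chen function F_a. -/
/-- Uniqueness: if `H` on `[−1,1]` satisfies the cross-multiplied tail-balance
equation with linear balance `1/2 + (t+1)·a/4` for an ability `a ∈ (0,1]`, then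
`H` is the Alpern–Chen function `F_a(t) = (t+1)(a·t − a + 2)/4`. -/
theorem alpernChen_unique (a : ℝ) (ha : a ∈ Set.Ioc (0 : ℝ) 1) (H : ℝ → ℝ)
    (hH : ∀ t ∈ Set.Icc (-1 : ℝ) 1,
      1 - H t = (1 / 2 + (t + 1) * a / 4) * (1 - H t + H (-t))) :
    ∀ t ∈ Set.Icc (-1 : ℝ) 1, H t = (t + 1) * (a * t - a + 2) / 4 := by
  intro t ht
  obtain ⟨ht1, ht2⟩ := ht
  have h1 := hH t ⟨ht1, ht2⟩
  have h2 := hH (-t) ⟨by linarith, by linarith⟩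
  simp only [neg_neg] at h2
  have ha0 : a ≠ 0 := ne_of_gt ha.1
  have key : a * H t = a * ((t + 1) * (a * t - a + 2) / 4) := by
    linear_combination (2 * (1 - (1 / 2 + (-t + 1) * a / 4))) * h1 -
      (2 * (1 / 2 + (t + 1) * a / 4)) * h2
  exact mul_left_cancel₀ ha0 key
end

section
/- Let α : [−1,1] → ℝ satisfy 1/2 < α(t) < 1 for all t ∈ (−1,1), and let H : [−1,1] → ℝ be such that for all t ∈ (−1,1) one has 1 − H(t) + H(−t) ≠ 0 and (1 − H(t)) / (1 − H(t) + H(−t)) = α(t). Then for all t ∈ (−1,1), H(t) = (2α(t) − 1)(1 − α(−t)) / (α(t) + α(−t) − 1), where the denominator α(t) + α(−t) − 1 is strictly positive. -/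
/-- Solution of the tail-balance functional equation: if `1/2 < α(t) < 1` on
`(−1,1)` and `(1 − H(t))/(1 − H(t) + H(−t)) = α(t)` with nonzero denominator,
then `H(t) = (2α(t) − 1)(1 − α(−t))/(α(t) + α(−t) − 1)`, the denominator of
which is strictly positive. -/
theorem tail_balance_solution (α H : ℝ → ℝ)
    (hα : ∀ t ∈ Set.Ioo (-1 : ℝ) 1, 1 / 2 < α t ∧ α t < 1)
    (hH : ∀ t ∈ Set.Ioo (-1 : ℝ) 1,
      1 - H t + H (-t) ≠ 0 ∧ (1 - H t) / (1 - H t + H (-t)) = α t) :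
    ∀ t ∈ Set.Ioo (-1 : ℝ) 1,
      0 < α t + α (-t) - 1 ∧
      H t = (2 * α t - 1) * (1 - α (-t)) / (α t + α (-t) - 1) := by
  intro t ht
  have ht' : -t ∈ Set.Ioo (-1 : ℝ) 1 := ⟨by linarith [ht.2], by linarith [ht.1]⟩
  obtain ⟨ha1, ha2⟩ := hα t ht
  obtain ⟨hb1, hb2⟩ := hα (-t) ht'
  obtain ⟨hd1, he1⟩ := hH t ht
  obtain ⟨hd2, he2⟩ := hH (-t) ht'

  simp only [neg_neg] at hd2 he2
  have hs : 0 < α t + α (-t) - 1 := by linarith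
  refine ⟨hs, ?_⟩
  have e1 : 1 - H t = α t * (1 - H t + H (-t)) := by
    rw [div_eq_iff hd1] at he1; linarith [he1]
  have e2 : 1 - H (-t) = α (-t) * (1 - H (-t) + H t) := by
    rw [div_eq_iff hd2] at he2; linarith [he2]
  rw [eq_div_iff (ne_of_gt hs)]
  nlinarith [mul_self_nonneg (1 - H t + H (-t)), e1, e2,
    mul_comm (α t) (α (-t))]
end

section
/- Let α : [−1,1] → ℝ satisfy 1/2 < α(t) < 1 for all t ∈ (−1,1), and let H : [−1,1] → ℝ be such that for all t ∈ (−1,1) one has 1 − H(t) + H(−t) ≠ 0 and (1 − H(t)) / (1 − H(t) + H(−t)) = α(t). Then H(t) < 1 for all t ∈ (−1,1). -/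
/-- If `1/2 < α(t) < 1` on `(−1,1)` and `H` satisfies the tail-balance equation
`(1 − H(t))/(1 − H(t) + H(−t)) = α(t)` with nonzero denominator, then `H(t) < 1`
on `(−1,1)`. -/
theorem tail_balance_lt_one (α H : ℝ → ℝ)
    (hα : ∀ t ∈ Set.Ioo (-1 : ℝ) 1, 1 / 2 < α t ∧ α t < 1)
    (hH : ∀ t ∈ Set.Ioo (-1 : ℝ) 1,
      1 - H t + H (-t) ≠ 0 ∧ (1 - H t) / (1 - H t + H (-t)) = α t) :
    ∀ t ∈ Set.Ioo (-1 : ℝ) 1, H t < 1 := by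
  intro t ht
  have hnt : -t ∈ Set.Ioo (-1 : ℝ) 1 := by
    constructor <;> linarith [ht.1, ht.2]
  obtain ⟨hd1, he1⟩ := hH t ht
  obtain ⟨hd2, he2⟩ := hH (-t) hnt
  rw [neg_neg] at hd2 he2
  obtain ⟨ha1, ha2⟩ := hα t ht
  obtain ⟨hb1, hb2⟩ := hα (-t) hnt
  have e1 : 1 - H t = α t * (1 - H t + H (-t)) := by
    field_simp at he1; linarith
  have e2 : 1 - H (-t) = α (-t) * (1 - H (-t) + H t) := by
    field_simp at he2; linarith
  nlinarith [mul_pos (sub_pos.mpr ha2) (sub_pos.mpr hb2),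
    mul_pos (by linarith : (0:ℝ) < α t) (by linarith : (0:ℝ) < α (-t))]
end

section
/- Let λ > 0 and let α : [−1,1] → ℝ with α(t) > 0 for all t ∈ [−1,1]. Suppose H : [−1,1] → ℝ satisfies, for all t ∈ [−1,1], the cross-multiplied odds tail-balance equation (1 − α(t))·(1 − H(t)) = λ·α(t)·H(−t), and suppose that λ²·α(t)·α(−t) ≠ (1 − α(t))·(1 − α(−t)) for all t ∈ [−1,1]. Then for all t ∈ [−1,1], H(t) = ((λ+1)·α(t) − 1)·(1 − α(−t)) / (α(t) + α(−t) + (λ² − 1)·α(t)·α(−t) − 1). -/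
/-- Solution of the cross-multiplied odds tail-balance equation
`(1 − α(t))·(1 − H(t)) = λ·α(t)·H(−t)` on `[−1,1]`. -/
theorem odds_tail_balance_solution (l : ℝ) (hl : 0 < l) (α H : ℝ → ℝ)
    (hα : ∀ t ∈ Set.Icc (-1 : ℝ) 1, 0 < α t)
    (hEq : ∀ t ∈ Set.Icc (-1 : ℝ) 1,
      (1 - α t) * (1 - H t) = l * α t * H (-t))
    (hden : ∀ t ∈ Set.Icc (-1 : ℝ) 1,
      l ^ 2 * α t * α (-t) ≠ (1 - α t) * (1 - α (-t))) :
    ∀ t ∈ Set.Icc (-1 : ℝ) 1,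
      H t = ((l + 1) * α t - 1) * (1 - α (-t)) /
        (α t + α (-t) + (l ^ 2 - 1) * (α t * α (-t)) - 1) := by
  intro t ht
  have ht' : -t ∈ Set.Icc (-1 : ℝ) 1 := by
    constructor <;> [linarith [ht.2]; linarith [ht.1]]
  have e1 := hEq t ht
  have e2 := hEq (-t) ht'
  rw [neg_neg] at e2
  have hd := hden t ht
  rw [eq_div_iff (by intro h; apply hd; linear_combination h)]
  linear_combination (1 - α (-t)) * e1 - l * α t * e2
end

section
/- Let θ ∈ (0,1), λ = (1−θ)/θ, a ∈ (0,1], and define α(t) = θ + (t+1)·(1−θ)·a/2, D(t) = −a²/4 + a²t²/4 + a + λa²/4 − λa²t²/4, and H(t) = (1+t)(a·t − a + 2)·a / (4·D(t)) for t ∈ [−1,1]. Then D(t) > 0 for all t ∈ [−1,1], and H satisfies the odds tail-balance equation in cross-multiplied form: (1 − α(t))·(1 − H(t)) = λ·α(t)·H(−t) for all t ∈ [−1,1]. -/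
/-- The explicit solution of the odds tail-balance equation with the linear
balance function `α(t) = θ + (t+1)(1−θ)a/2`: the denominator
`D(t) = −a²/4 + a²t²/4 + a + λa²/4 − λa²t²/4` is positive and
`H(t) = (1+t)(a·t − a + 2)·a/(4·D(t))` satisfies
`(1 − α(t))·(1 − H(t)) = λ·α(t)·H(−t)` on `[−1,1]`. -/
theorem odds_linear_solution (θ : ℝ) (hθ : θ ∈ Set.Ioo (0 : ℝ) 1)
    (l : ℝ) (hl : l = (1 - θ) / θ) (a : ℝ) (ha : a ∈ Set.Ioc (0 : ℝ) 1)
    (α D H : ℝ → ℝ)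
    (hα : ∀ t, α t = θ + (t + 1) * (1 - θ) * a / 2)
    (hD : ∀ t, D t = -a ^ 2 / 4 + a ^ 2 * t ^ 2 / 4 + a + l * a ^ 2 / 4
      - l * a ^ 2 * t ^ 2 / 4)
    (hH : ∀ t, H t = (1 + t) * (a * t - a + 2) * a / (4 * D t)) :
    ∀ t ∈ Set.Icc (-1 : ℝ) 1,
      0 < D t ∧ (1 - α t) * (1 - H t) = l * α t * H (-t) := by
  obtain ⟨hθ0, hθ1⟩ := hθ
  obtain ⟨ha0, ha1⟩ := ha
  intro t ⟨ht1, ht2⟩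
  have hlpos : 0 < l := by
    rw [hl]; exact div_pos (by linarith) hθ0
  have h1t : 0 ≤ 1 - t ^ 2 := by nlinarith
  have ha2 : a ^ 2 ≤ a := by nlinarith
  have hDpos : 0 < D t := by
    rw [hD]
    nlinarith [mul_nonneg (mul_nonneg hlpos.le (sq_nonneg a)) h1t,
      mul_nonneg (sq_nonneg a) h1t, sq_nonneg (a * t)]
  refine ⟨hDpos, ?_⟩
  have hDsym : D (-t) = D t := by rw [hD, hD]; ring
  have hθne : θ ≠ 0 := ne_of_gt hθ0
  have hDne : D t ≠ 0 := ne_of_gt hDpos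
  subst hl
  rw [hH, hH, hDsym]
  field_simp
  rw [hα, hD]
  field_simp
  ring
end

section
/- Let a ∈ (0,1] and let H : [−1,1] → ℝ satisfy 1 − H(t) = ((2 + (1+t)·a)/4) · (1 − H(t) + H(−t)) for all t ∈ [−1,1]. Then H(t) − H(−t) = t for all t ∈ [−1,1]. -/
/-- If `H` satisfies the cross-multiplied tail-balance equation
`1 − H(t) = ((2 + (1+t)a)/4)·(1 − H(t) + H(−t))` on `[−1,1]` with `a ∈ (0,1]`,
then `H(t) − H(−t) = t` on `[−1,1]`. -/
theorem tail_balance_odd_part (a : ℝ) (ha : a ∈ Set.Ioc (0 : ℝ) 1) (H : ℝ → ℝ)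
    (hH : ∀ t ∈ Set.Icc (-1 : ℝ) 1,
      1 - H t = ((2 + (1 + t) * a) / 4) * (1 - H t + H (-t))) :
    ∀ t ∈ Set.Icc (-1 : ℝ) 1, H t - H (-t) = t := by
  intro t ht
  have h1 := hH t ht
  have h2 := hH (-t) ⟨by linarith [ht.2], by linarith [ht.1]⟩
  rw [neg_neg] at h2
  have ha0 : a ≠ 0 := ne_of_gt ha.1
  have key : 2*a*(H t - H (-t)) = 2*a*t := by linear_combination 4*(h1 - h2)
  exact mul_left_cancel₀ (by positivity) key
end

section
/- Let a ∈ (0,1] and let H : [−1,1] → ℝ satisfy 1 − H(t) = ((2 + (1+t)·a)/4) · (1 − H(t) + H(−t)) for all t ∈ [−1,1]. Then H(t) + H(−t) = (2 − a + a·t²)/2 for all t ∈ [−1,1]. -/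
/-- If `H` satisfies the cross-multiplied tail-balance equation
`1 − H(t) = ((2 + (1+t)a)/4)·(1 − H(t) + H(−t))` on `[−1,1]` with `a ∈ (0,1]`,
then `H(t) + H(−t) = (2 − a + a·t²)/2` on `[−1,1]`. -/
theorem tail_balance_even_part (a : ℝ) (ha : a ∈ Set.Ioc (0 : ℝ) 1) (H : ℝ → ℝ)
    (hH : ∀ t ∈ Set.Icc (-1 : ℝ) 1,
      1 - H t = ((2 + (1 + t) * a) / 4) * (1 - H t + H (-t))) :
    ∀ t ∈ Set.Icc (-1 : ℝ) 1, H t + H (-t) = (2 - a + a * t ^ 2) / 2 := by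
  intro t ht
  have h1 := hH t ht
  have h2 := hH (-t) ⟨by linarith [ht.2], by linarith [ht.1]⟩
  rw [neg_neg] at h2
  have ha0 : 0 < a := ha.1
  -- u = 1 - H t + H (-t) equals 1 - t
  have hu : 1 - H t + H (-t) = 1 - t := by
    nlinarith [h1, h2, ha0]
  rw [hu] at h1
  linear_combination hu - 2 * h1
end
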